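/- Let k ∈ ℤ and let m ≥ 1 be an integer. Suppose h_0, …, h_{2m−1} : ℍ → ℂ are twice continuously differentiable (as functions of (u, v) with τ = u + iv) and the function Φ(τ, z) := Σ_{ℓ=0}^{2m−1} h_ℓ(τ) ϑ_{m,ℓ}(τ, z) satisfies (C^sk_{k,m} Φ)(τ, z) = 0 for all (τ, z) ∈ ℍ × ℂ. Then for every ℓ ∈ {0, …, 2m−1} and every τ ∈ ℍ, 2iv(k − 1/2)(∂_τ h_ℓ)(τ) + 4v²(∂_τ ∂_τ̄ h_ℓ)(τ) = 0, where v = Im τ. -/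

import Mathlib

open Complex ComplexConjugate

/-- The Jacobi theta function `ϑ_{m,ℓ}(τ, z) = Σ_{r ∈ ℤ, r ≡ ℓ mod 2m} e(r²τ/(4m) + rz)`. -/
noncomputable def jacobiThetaML (m ℓ : ℤ) (τ z : ℂ) : ℂ :=
  ∑' r : {r : ℤ // r ≡ ℓ [ZMOD 2 * m]},
    Complex.exp (2 * Real.pi * Complex.I *
      (((r : ℤ) : ℂ) ^ 2 * τ / (4 * m) + ((r : ℤ) : ℂ) * z))

/-- Real partial derivative of `f : ℂ → ℂ` at `τ` in the direction `w`. -/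
noncomputable def partialDeriv (w : ℂ) (f : ℂ → ℂ) (τ : ℂ) : ℂ := fderiv ℝ f τ w

/-- Wirtinger derivative `∂_τ f = (1/2)(∂f/∂u − i ∂f/∂v)` where `τ = u + iv`. -/
noncomputable def dTau (f : ℂ → ℂ) : ℂ → ℂ :=
  fun τ => (1 / 2) * (partialDeriv 1 f τ - Complex.I * partialDeriv Complex.I f τ)

/-- Wirtinger derivative `∂_τ̄ f = (1/2)(∂f/∂u + i ∂f/∂v)` where `τ = u + iv`. -/
noncomputable def dTauBar (f : ℂ → ℂ) : ℂ → ℂ :=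
  fun τ => (1 / 2) * (partialDeriv 1 f τ + Complex.I * partialDeriv Complex.I f τ)

/-- The heat operator `L_m = 8πim ∂_τ − ∂²/∂z²` acting on `Φ(τ, z)`. -/
noncomputable def heatOp (m : ℤ) (Φ : ℂ → ℂ → ℂ) (τ z : ℂ) : ℂ :=
  8 * Real.pi * Complex.I * (m : ℂ) * dTau (fun w => Φ w z) τ - iteratedDeriv 2 (Φ τ) z

/-- The skew Casimir operator
`C^sk_{k,m} = −(iv²/(πm)) v^{1/2−k} ∘ ∂_τ̄ ∘ v^{k−1/2} ∘ L_m`, `v = Im τ`. -/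
noncomputable def skewCasimir (k m : ℤ) (Φ : ℂ → ℂ → ℂ) (τ z : ℂ) : ℂ :=
  -(Complex.I * (τ.im : ℂ) ^ 2 / (Real.pi * m)) *
    ((τ.im ^ ((1 : ℝ) / 2 - (k : ℝ)) : ℝ) : ℂ) *
    dTauBar (fun w => ((w.im ^ ((k : ℝ) - 1 / 2) : ℝ) : ℂ) * heatOp m Φ w z) τ

/-- The weight-`κ` hyperbolic Laplacian
`Δ_κ = −v²(∂²/∂u² + ∂²/∂v²) + iκv(∂/∂u + i ∂/∂v)`, `τ = u + iv`. -/
noncomputable def hypLaplacian (κ : ℝ) (f : ℂ → ℂ) (τ : ℂ) : ℂ :=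
  -(τ.im : ℂ) ^ 2 *
      (partialDeriv 1 (partialDeriv 1 f) τ +
        partialDeriv Complex.I (partialDeriv Complex.I f) τ) +
    Complex.I * (κ : ℂ) * (τ.im : ℂ) *
      (partialDeriv 1 f τ + Complex.I * partialDeriv Complex.I f τ)

/-! Each `ϑ_{m,ℓ}` is holomorphic in `τ` and solves the heat equation `8πim ∂_τ ϑ = ∂_z² ϑ`, so
`L_m Φ = 8πim Σ (∂_τ h_ℓ) ϑ_{m,ℓ}`, and applying `∂_τ̄` (which only sees `v^{k-1/2}` and the `h_ℓ`)
gives `C^sk_{k,m} Φ = 2 Σ (2iv(k - 1/2) ∂_τ h_ℓ + 4v² ∂_τ̄ ∂_τ h_ℓ) ϑ_{m,ℓ}`. For fixed `τ` the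
functions `ϑ_{m,ℓ}(τ, ·)`, `0 ≤ ℓ < 2m`, are linearly independent, because their Fourier
coefficients on `[0, 1]` live on the disjoint residue classes `ℓ mod 2m`; so every coefficient
vanishes. Finally `∂_τ̄ ∂_τ = ∂_τ ∂_τ̄` on `C²` functions. -/

open scoped Real

noncomputable section

section Wirtinger

variable {f g : ℂ → ℂ} {τ : ℂ}

lemma dTau_eq_deriv (hf : DifferentiableAt ℂ f τ) : dTau f τ = deriv f τ := by
  simp only [dTau, partialDeriv, (hf.hasDerivAt.hasFDerivAt.restrictScalars ℝ).fderiv]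
  simp
  linear_combination (-deriv f τ / 2) * I_sq

lemma dTauBar_eq_zero (hf : DifferentiableAt ℂ f τ) : dTauBar f τ = 0 := by
  simp only [dTauBar, partialDeriv, (hf.hasDerivAt.hasFDerivAt.restrictScalars ℝ).fderiv]
  simp
  linear_combination deriv f τ * I_sq

lemma dTauBar_congr (h : f =ᶠ[nhds τ] g) : dTauBar f τ = dTauBar g τ := by
  simp only [dTauBar, partialDeriv, h.fderiv_eq]

lemma dTau_mul (hf : DifferentiableAt ℝ f τ) (hg : DifferentiableAt ℝ g τ) :
    dTau (fun w => f w * g w) τ = dTau f τ * g τ + f τ * dTau g τ := by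
  simp only [dTau, partialDeriv, fderiv_fun_mul hf hg, add_apply, smul_apply, smul_eq_mul]
  ring

lemma dTauBar_mul (hf : DifferentiableAt ℝ f τ) (hg : DifferentiableAt ℝ g τ) :
    dTauBar (fun w => f w * g w) τ = dTauBar f τ * g τ + f τ * dTauBar g τ := by
  simp only [dTauBar, partialDeriv, fderiv_fun_mul hf hg, add_apply, smul_apply, smul_eq_mul]
  ring

lemma dTau_finset_sum {ι : Type*} (s : Finset ι) {F : ι → ℂ → ℂ}
    (hF : ∀ i ∈ s, DifferentiableAt ℝ (F i) τ) :
    dTau (fun w => ∑ i ∈ s, F i w) τ = ∑ i ∈ s, dTau (F i) τ := by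
  simp only [dTau, partialDeriv, fderiv_fun_sum hF, sum_apply,
    Finset.mul_sum, ← Finset.sum_sub_distrib]

lemma dTauBar_finset_sum {ι : Type*} (s : Finset ι) {F : ι → ℂ → ℂ}
    (hF : ∀ i ∈ s, DifferentiableAt ℝ (F i) τ) :
    dTauBar (fun w => ∑ i ∈ s, F i w) τ = ∑ i ∈ s, dTauBar (F i) τ := by
  simp only [dTauBar, partialDeriv, fderiv_fun_sum hF, sum_apply,
    Finset.mul_sum, ← Finset.sum_add_distrib]

lemma dTauBar_const_mul (hg : DifferentiableAt ℝ g τ) (c : ℂ) :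
    dTauBar (fun w => c * g w) τ = c * dTauBar g τ := by
  simp only [dTauBar, partialDeriv, fderiv_const_mul hg, smul_apply, smul_eq_mul]
  ring

lemma dTauBar_mul_of_differentiableAt (hf : DifferentiableAt ℝ f τ) (hg : DifferentiableAt ℂ g τ) :
    dTauBar (fun w => f w * g w) τ = dTauBar f τ * g τ := by
  rw [dTauBar_mul hf (hg.restrictScalars ℝ), dTauBar_eq_zero hg, mul_zero, add_zero]

lemma dTauBar_ofReal_im_rpow (c : ℝ) (hτ : 0 < τ.im) :
    dTauBar (fun w => ((w.im ^ c : ℝ) : ℂ)) τ = I / 2 * c * (τ.im ^ (c - 1) : ℝ) := by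
  have h : HasFDerivAt (fun w : ℂ => ((w.im ^ c : ℝ) : ℂ))
      (ofRealCLM.comp ((c * τ.im ^ (c - 1)) • imCLM)) τ :=
    ofRealCLM.hasFDerivAt.comp τ
      ((Real.hasDerivAt_rpow_const (Or.inl hτ.ne')).comp_hasFDerivAt τ imCLM.hasFDerivAt)
  simp only [dTauBar, partialDeriv, h.fderiv]
  simp
  ring

lemma hasFDerivAt_partialDeriv (hf : ContDiffAt ℝ 2 f τ) (u : ℂ) :
    HasFDerivAt (partialDeriv u f) ((fderiv ℝ (fderiv ℝ f) τ).flip u) τ := by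
  have h : DifferentiableAt ℝ (fderiv ℝ f) τ :=
    (hf.fderiv_right (m := 1) (by norm_num)).differentiableAt one_ne_zero
  exact h.hasFDerivAt.clm_apply (hasFDerivAt_const u τ) |>.congr_fderiv (by ext; simp)

lemma partialDeriv_linearCombination_partialDeriv (hf : ContDiffAt ℝ 2 f τ) (a b w : ℂ) :
    partialDeriv w (fun σ => a * partialDeriv 1 f σ + b * partialDeriv I f σ) τ =
      a * fderiv ℝ (fderiv ℝ f) τ w 1 + b * fderiv ℝ (fderiv ℝ f) τ w I := by
  have h := ((hasFDerivAt_partialDeriv hf 1).const_mul a).fun_add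
    ((hasFDerivAt_partialDeriv hf I).const_mul b)
  rw [partialDeriv, h.fderiv]
  simp

lemma differentiableAt_dTau (hf : ContDiffAt ℝ 2 f τ) : DifferentiableAt ℝ (dTau f) τ := by
  have h₁ := (hasFDerivAt_partialDeriv hf 1).differentiableAt
  have h₂ := (hasFDerivAt_partialDeriv hf I).differentiableAt
  unfold dTau
  fun_prop

/-- Both sides equal a quarter of the Laplacian, by symmetry of the second derivative. -/
lemma dTau_dTauBar_comm (hf : ContDiffAt ℝ 2 f τ) : dTau (dTauBar f) τ = dTauBar (dTau f) τ := by
  have hsymm := (hf.isSymmSndFDerivAt (by simp)).eq 1 I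
  have hbar : dTauBar f = fun σ => 1 / 2 * partialDeriv 1 f σ + I / 2 * partialDeriv I f σ := by
    funext σ; simp only [dTauBar]; ring
  have hdel : dTau f = fun σ => 1 / 2 * partialDeriv 1 f σ + -I / 2 * partialDeriv I f σ := by
    funext σ; simp only [dTau]; ring
  rw [hbar, hdel]
  simp only [dTau, dTauBar, partialDeriv_linearCombination_partialDeriv hf, hsymm]
  ring

end Wirtinger

lemma hasDerivAt_tsum_of_norm_le {ι : Type*} {F F' : ι → ℂ → ℂ} {u : ι → ℝ} {U : Set ℂ}
    (hu : Summable u) (hU : IsOpen U) (hF : ∀ i, ∀ w ∈ U, HasDerivAt (F i) (F' i w) w)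
    (hF_le : ∀ i, ∀ w ∈ U, ‖F i w‖ ≤ u i) {x : ℂ} (hx : x ∈ U) :
    HasDerivAt (fun w => ∑' i, F i w) (∑' i, F' i x) x := by
  have hd i : DifferentiableOn ℂ (F i) U := fun w hw =>
    (hF i w hw).differentiableAt.differentiableWithinAt
  have hsum := hasSum_deriv_of_summable_norm hu hd hU hF_le hx
  simp only [fun i => (hF i x hx).deriv] at hsum
  rw [hsum.tsum_eq]
  exact ((differentiableOn_tsum_of_summable_norm hu hd hU hF_le).differentiableAt
    (hU.mem_nhds hx)).hasDerivAt

lemma integral_exp_two_pi_I_int_mul (k : ℤ) :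
    ∫ x in (0 : ℝ)..1, cexp (2 * π * I * k * x) = if k = 0 then 1 else 0 := by
  split_ifs with hk
  · simp [hk]
  have hc : 2 * π * I * k ≠ 0 := mul_ne_zero two_pi_I_ne_zero (by exact_mod_cast hk)
  rw [integral_exp_mul_complex hc, ofReal_one, mul_one, ofReal_zero, mul_zero, exp_zero,
    show 2 * π * I * k = k * (2 * π * I) by ring, exp_int_mul_two_pi_mul_I, sub_self, zero_div]

lemma integral_tsum_mul_exp_neg {a : ℤ → ℂ} (ha : Summable fun r => ‖a r‖) (n : ℤ) :
    ∫ x in (0 : ℝ)..1, (∑' r, a r * cexp (2 * π * I * r * x)) * cexp (-(2 * π * I * n * x)) =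
      a n := by
  set F : ℤ → ℝ → ℂ := fun r x => a r * cexp (2 * π * I * (r - n : ℤ) * x)
  have hF r (x : ℝ) : a r * cexp (2 * π * I * r * x) * cexp (-(2 * π * I * n * x)) = F r x := by
    rw [mul_assoc, ← exp_add]
    simp only [F]
    push_cast
    ring_nf
  have hF_int r : MeasureTheory.Integrable (F r) (MeasureTheory.volume.restrict (Set.Ioc 0 1)) :=
    (by fun_prop : Continuous (F r)).integrableOn_Ioc
  have hF_norm r : ∫ x in Set.Ioc (0 : ℝ) 1, ‖F r x‖ = ‖a r‖ := by
    simp [F, norm_exp]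
  simp_rw [← tsum_mul_right, hF, intervalIntegral.integral_of_le zero_le_one,
    ← MeasureTheory.integral_tsum_of_summable_integral_norm hF_int (by simpa [hF_norm] using ha),
    ← intervalIntegral.integral_of_le zero_le_one, F, intervalIntegral.integral_const_mul,
    integral_exp_two_pi_I_int_mul, sub_eq_zero, mul_ite, mul_one, mul_zero]
  exact tsum_ite_eq n a

section Theta

variable {m : ℤ} {τ : ℂ}

def thetaTerm (m r : ℤ) (τ z : ℂ) : ℂ :=
  cexp (2 * π * I * ((r : ℂ) ^ 2 * τ / (4 * m) + r * z))

/-- The derivatives of `ϑ_{m,ℓ} = thetaSeries m ℓ 0` are multiples of these series. -/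
def thetaSeries (m ℓ : ℤ) (n : ℕ) (τ z : ℂ) : ℂ :=
  ∑' r : {r : ℤ // r ≡ ℓ [ZMOD 2 * m]}, ((r : ℤ) : ℂ) ^ n * thetaTerm m r τ z

lemma jacobiThetaML_eq_thetaSeries_zero (m ℓ : ℤ) : jacobiThetaML m ℓ = thetaSeries m ℓ 0 := by
  ext τ z
  simp [jacobiThetaML, thetaSeries, thetaTerm]

lemma thetaTerm_eq_jacobiTheta₂_term (m r : ℤ) (τ z : ℂ) :
    thetaTerm m r τ z = jacobiTheta₂_term r z (τ / (2 * m)) := by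
  rw [thetaTerm, jacobiTheta₂_term]
  ring_nf

lemma hasDerivAt_thetaTerm_fst (m r : ℤ) (τ z : ℂ) :
    HasDerivAt (thetaTerm m r · z) (2 * π * I * (r ^ 2 / (4 * m)) * thetaTerm m r τ z) τ := by
  have h := ((((hasDerivAt_id τ).const_mul ((r : ℂ) ^ 2)).div_const (4 * m)).add_const
    (r * z)).const_mul (2 * π * I)
  exact h.cexp.congr_deriv (by simp only [thetaTerm, id]; ring)

lemma hasDerivAt_thetaTerm_snd (m r : ℤ) (τ z : ℂ) :
    HasDerivAt (thetaTerm m r τ) (2 * π * I * r * thetaTerm m r τ z) z := by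
  have h := (((hasDerivAt_id z).const_mul (r : ℂ)).const_add ((r : ℂ) ^ 2 * τ / (4 * m))).const_mul
    (2 * π * I)
  exact h.cexp.congr_deriv (by simp only [thetaTerm, id]; ring)

lemma norm_pow_mul_thetaTerm_le (hm : 0 < m) {S T : ℝ} (hT : 0 < T) {z : ℂ} (hz : |z.im| ≤ S)
    (hτ : 2 * m * T ≤ τ.im) (n : ℕ) (r : ℤ) :
    ‖(r : ℂ) ^ n * thetaTerm m r τ z‖ ≤
      (|r| ^ n : ℝ) * Real.exp (-π * (T * r ^ 2 - 2 * S * |r|)) := by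
  have hτ' : T ≤ (τ / (2 * m)).im := by
    rw [show (2 * m : ℂ) = ((2 * m : ℝ) : ℂ) by push_cast; rfl, div_ofReal_im,
      le_div_iff₀ (by positivity)]
    linarith
  rw [norm_mul, norm_pow, norm_intCast, ← Int.cast_abs, thetaTerm_eq_jacobiTheta₂_term]
  exact mul_le_mul_of_nonneg_left (norm_jacobiTheta₂_term_le hT hz hτ' r) (by positivity)

lemma hasDerivAt_thetaSeries_fst (hm : 0 < m) (ℓ : ℤ) (n : ℕ) (z : ℂ) (hτ : 0 < τ.im) :
    HasDerivAt (thetaSeries m ℓ n · z) (π * I / (2 * m) * thetaSeries m ℓ (n + 2) τ z) τ := by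
  have hT : 0 < τ.im / (4 * m) := by positivity
  have hT₂ : 2 * m * (τ.im / (4 * m)) = τ.im / 2 := by field_simp; ring
  have hderiv := hasDerivAt_tsum_of_norm_le (U := {w | τ.im / 2 < w.im})
    (F := fun (r : {r : ℤ // r ≡ ℓ [ZMOD 2 * m]}) w => ((r : ℤ) : ℂ) ^ n * thetaTerm m r w z)
    ((summable_pow_mul_jacobiTheta₂_term_bound |z.im| hT n).subtype _)
    (isOpen_lt continuous_const continuous_im)
    (fun r w _ => (hasDerivAt_thetaTerm_fst m r w z).const_mul _)
    (fun r w hw => norm_pow_mul_thetaTerm_le hm hT le_rfl (by rw [hT₂]; exact hw.le) n r.1)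
    (show τ.im / 2 < τ.im by linarith)
  rw [thetaSeries, ← tsum_mul_left]
  refine hderiv.congr_deriv (tsum_congr fun r => ?_)
  field_simp
  ring

lemma hasDerivAt_thetaSeries_snd (hm : 0 < m) (ℓ : ℤ) (n : ℕ) (hτ : 0 < τ.im) (z : ℂ) :
    HasDerivAt (thetaSeries m ℓ n τ) (2 * π * I * thetaSeries m ℓ (n + 1) τ z) z := by
  have hT : 0 < τ.im / (2 * m) := by positivity
  have hT₂ : 2 * m * (τ.im / (2 * m)) = τ.im := by field_simp
  have hderiv := hasDerivAt_tsum_of_norm_le (U := {y | |y.im| < |z.im| + 1})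
    (F := fun (r : {r : ℤ // r ≡ ℓ [ZMOD 2 * m]}) y => ((r : ℤ) : ℂ) ^ n * thetaTerm m r τ y)
    ((summable_pow_mul_jacobiTheta₂_term_bound (|z.im| + 1) hT n).subtype _)
    (isOpen_lt (by fun_prop) continuous_const)
    (fun r y _ => (hasDerivAt_thetaTerm_snd m r τ y).const_mul _)
    (fun r y hy => norm_pow_mul_thetaTerm_le hm hT hy.le hT₂.le n r.1)
    (show |z.im| < |z.im| + 1 by linarith)
  rw [thetaSeries, ← tsum_mul_left]
  refine hderiv.congr_deriv (tsum_congr fun r => ?_)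
  ring

lemma differentiableAt_jacobiThetaML_fst (hm : 0 < m) (ℓ : ℤ) (z : ℂ) (hτ : 0 < τ.im) :
    DifferentiableAt ℂ (jacobiThetaML m ℓ · z) τ := by
  rw [jacobiThetaML_eq_thetaSeries_zero]
  exact (hasDerivAt_thetaSeries_fst hm ℓ 0 z hτ).differentiableAt

lemma differentiable_jacobiThetaML_snd (hm : 0 < m) (ℓ : ℤ) (hτ : 0 < τ.im) :
    Differentiable ℂ (jacobiThetaML m ℓ τ) := by
  rw [jacobiThetaML_eq_thetaSeries_zero]
  exact fun z => (hasDerivAt_thetaSeries_snd hm ℓ 0 hτ z).differentiableAt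

lemma jacobiThetaML_heat (hm : 0 < m) (ℓ : ℤ) (z : ℂ) (hτ : 0 < τ.im) :
    8 * π * I * m * deriv (jacobiThetaML m ℓ · z) τ = iteratedDeriv 2 (jacobiThetaML m ℓ τ) z := by
  have hderiv : deriv (thetaSeries m ℓ 0 τ) = fun y => 2 * π * I * thetaSeries m ℓ 1 τ y :=
    funext fun y => (hasDerivAt_thetaSeries_snd hm ℓ 0 hτ y).deriv
  rw [jacobiThetaML_eq_thetaSeries_zero, (hasDerivAt_thetaSeries_fst hm ℓ 0 z hτ).deriv,
    iteratedDeriv_succ, iteratedDeriv_one, hderiv,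
    ((hasDerivAt_thetaSeries_snd hm ℓ 1 hτ z).const_mul _).deriv]
  have hm' : (m : ℂ) ≠ 0 := by exact_mod_cast hm.ne'
  field_simp
  norm_num

lemma thetaTerm_eq_mul_exp (m r : ℤ) (τ z : ℂ) :
    thetaTerm m r τ z = thetaTerm m r τ 0 * cexp (2 * π * I * r * z) := by
  rw [thetaTerm, thetaTerm, ← exp_add]
  ring_nf

lemma jacobiThetaML_ofReal_eq_tsum (m ℓ : ℤ) (τ : ℂ) (x : ℝ) :
    jacobiThetaML m ℓ τ x = ∑' r : ℤ,
      {r | r ≡ ℓ [ZMOD 2 * m]}.indicator (thetaTerm m · τ 0) r * cexp (2 * π * I * r * x) := by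
  rw [jacobiThetaML_eq_thetaSeries_zero, thetaSeries]
  simp only [pow_zero, one_mul]
  refine (tsum_subtype {r | r ≡ ℓ [ZMOD 2 * m]} (thetaTerm m · τ x)).trans ?_
  refine tsum_congr fun r => ?_
  by_cases hr : r ≡ ℓ [ZMOD 2 * m]
  · simp [Set.indicator_of_mem, hr, ← thetaTerm_eq_mul_exp]
  · simp [Set.indicator_of_notMem, hr]

lemma integral_jacobiThetaML_mul_exp_neg (hm : 0 < m) (hτ : 0 < τ.im) (ℓ n : ℤ) :
    ∫ x in (0 : ℝ)..1, jacobiThetaML m ℓ τ x * cexp (-(2 * π * I * n * x)) =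
      {r | r ≡ ℓ [ZMOD 2 * m]}.indicator (thetaTerm m · τ 0) n := by
  have hT : 0 < τ.im / (2 * m) := by positivity
  have hT₂ : 2 * m * (τ.im / (2 * m)) = τ.im := by field_simp
  have hsum : Summable fun r => ‖{r | r ≡ ℓ [ZMOD 2 * m]}.indicator (thetaTerm m · τ 0) r‖ := by
    refine .of_nonneg_of_le (fun _ => norm_nonneg _)
      (fun r => (norm_indicator_le_norm_self _ _).trans ?_)
      (summable_pow_mul_jacobiTheta₂_term_bound 0 hT 0)
    simpa using norm_pow_mul_thetaTerm_le hm hT (S := 0) (z := 0) (by simp) hT₂.le 0 r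
  simp_rw [jacobiThetaML_ofReal_eq_tsum]
  exact integral_tsum_mul_exp_neg hsum n

lemma eq_zero_of_sum_mul_jacobiThetaML_eq_zero (hm : 0 < m) (hτ : 0 < τ.im) {c : ℕ → ℂ}
    (hc : ∀ x : ℝ, ∑ l ∈ Finset.range (2 * m).toNat, c l * jacobiThetaML m l τ x = 0)
    {l₀ : ℕ} (hl₀ : l₀ < (2 * m).toNat) : c l₀ = 0 := by
  have hcont (l : ℕ) : Continuous fun x : ℝ => jacobiThetaML m l τ x :=
    (differentiable_jacobiThetaML_snd hm l hτ).continuous.comp continuous_ofReal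
  have hcoeff : ∫ x in (0 : ℝ)..1, ∑ l ∈ Finset.range (2 * m).toNat,
      c l * (jacobiThetaML m l τ x * cexp (-(2 * π * I * (l₀ : ℤ) * x))) =
        c l₀ * thetaTerm m l₀ τ 0 := by
    rw [intervalIntegral.integral_finsetSum fun l _ =>
      Continuous.intervalIntegrable (by have := hcont l; fun_prop) _ _]
    simp_rw [intervalIntegral.integral_const_mul, integral_jacobiThetaML_mul_exp_neg hm hτ]
    rw [Finset.sum_eq_single_of_mem l₀ (Finset.mem_range.2 hl₀),
      Set.indicator_of_mem (s := {r : ℤ | r ≡ l₀ [ZMOD 2 * m]}) (Int.ModEq.refl _)]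
    intro l hl hne
    rw [Set.indicator_of_notMem, mul_zero]
    intro hmod
    rw [← Int.toNat_of_nonneg (by omega : 0 ≤ 2 * m), Set.mem_ofPred_eq, Int.natCast_modEq_iff]
      at hmod
    exact hne (hmod.eq_of_lt_of_lt hl₀ (Finset.mem_range.1 hl)).symm
  have hvanish (x : ℝ) : ∑ l ∈ Finset.range (2 * m).toNat,
      c l * (jacobiThetaML m l τ x * cexp (-(2 * π * I * (l₀ : ℤ) * x))) = 0 := by
    simp_rw [← mul_assoc, ← Finset.sum_mul, hc, zero_mul]
  simp_rw [hvanish, intervalIntegral.integral_zero] at hcoeff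
  exact (mul_eq_zero.1 hcoeff.symm).resolve_right (exp_ne_zero _)

end Theta

section SkewCasimir

variable {m : ℤ} {τ : ℂ} {ι : Type*} {s : Finset ι} {h : ι → ℂ → ℂ} {ℓ : ι → ℤ}

lemma heatOp_sum_mul_jacobiThetaML (hm : 0 < m) (hτ : 0 < τ.im)
    (hh : ∀ i ∈ s, DifferentiableAt ℝ (h i) τ) (z : ℂ) :
    heatOp m (fun w z => ∑ i ∈ s, h i w * jacobiThetaML m (ℓ i) w z) τ z =
      8 * π * I * m * ∑ i ∈ s, dTau (h i) τ * jacobiThetaML m (ℓ i) τ z := by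
  have hθ i := differentiableAt_jacobiThetaML_fst hm (ℓ i) z hτ
  have hdτ : dTau (fun w => ∑ i ∈ s, h i w * jacobiThetaML m (ℓ i) w z) τ =
      ∑ i ∈ s, (dTau (h i) τ * jacobiThetaML m (ℓ i) τ z +
        h i τ * deriv (jacobiThetaML m (ℓ i) · z) τ) := by
    rw [dTau_finset_sum s fun i hi => (hh i hi).fun_mul ((hθ i).restrictScalars ℝ)]
    exact Finset.sum_congr rfl fun i hi => by
      rw [dTau_mul (hh i hi) ((hθ i).restrictScalars ℝ), dTau_eq_deriv (hθ i)]
  have hdz : iteratedDeriv 2 (fun y => ∑ i ∈ s, h i τ * jacobiThetaML m (ℓ i) τ y) z =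
      ∑ i ∈ s, h i τ * iteratedDeriv 2 (jacobiThetaML m (ℓ i) τ) z := by
    rw [iteratedDeriv_fun_sum fun i _ =>
      (contDiff_const.mul (differentiable_jacobiThetaML_snd hm (ℓ i) hτ).contDiff).contDiffAt]
    simp_rw [iteratedDeriv_const_mul_field]
  simp only [heatOp]
  rw [hdτ, hdz]
  simp_rw [← jacobiThetaML_heat hm _ z hτ, Finset.mul_sum, ← Finset.sum_sub_distrib]
  exact Finset.sum_congr rfl fun i _ => by ring

lemma skewCasimir_sum_mul_jacobiThetaML (k : ℤ) (hm : 0 < m) (hτ : 0 < τ.im)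
    (hh : ∀ i ∈ s, ContDiffAt ℝ 2 (h i) τ) (z : ℂ) :
    skewCasimir k m (fun w z => ∑ i ∈ s, h i w * jacobiThetaML m (ℓ i) w z) τ z =
      2 * ∑ i ∈ s, (2 * I * τ.im * (k - 1 / 2) * dTau (h i) τ +
        4 * τ.im ^ 2 * dTauBar (dTau (h i)) τ) * jacobiThetaML m (ℓ i) τ z := by
  have hheat : ∀ᶠ w in nhds τ,
      heatOp m (fun w z => ∑ i ∈ s, h i w * jacobiThetaML m (ℓ i) w z) w z =
        8 * π * I * m * ∑ i ∈ s, dTau (h i) w * jacobiThetaML m (ℓ i) w z := by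
    filter_upwards [(isOpen_lt continuous_const continuous_im).mem_nhds hτ,
      Filter.eventually_all_finset s |>.2 fun i hi => (hh i hi).eventually (by simp)] with w hw hhw
    exact heatOp_sum_mul_jacobiThetaML hm hw (fun i hi => (hhw i hi).differentiableAt two_ne_zero) z
  have hθ i := differentiableAt_jacobiThetaML_fst hm (ℓ i) z hτ
  have hterm i (hi : i ∈ s) : DifferentiableAt ℝ
      (fun w => dTau (h i) w * jacobiThetaML m (ℓ i) w z) τ :=
    (differentiableAt_dTau (hh i hi)).fun_mul ((hθ i).restrictScalars ℝ)
  have hrpow : DifferentiableAt ℝ (fun w : ℂ => ((w.im ^ ((k : ℝ) - 1 / 2) : ℝ) : ℂ)) τ := by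
    fun_prop (disch := exact Or.inl hτ.ne')
  rw [skewCasimir, dTauBar_congr (hheat.mono fun w hw => congrArg _ hw),
    dTauBar_mul hrpow ((DifferentiableAt.fun_sum hterm).const_mul _),
    dTauBar_const_mul (DifferentiableAt.fun_sum hterm), dTauBar_finset_sum s hterm,
    Finset.sum_congr rfl fun i hi =>
      dTauBar_mul_of_differentiableAt (differentiableAt_dTau (hh i hi)) (hθ i),
    dTauBar_ofReal_im_rpow _ hτ]
  have hv : (τ.im : ℂ) ≠ 0 := ofReal_ne_zero.2 hτ.ne'
  have hm' : (m : ℂ) ≠ 0 := by exact_mod_cast hm.ne'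
  have hπ : (π : ℂ) ≠ 0 := ofReal_ne_zero.2 Real.pi_ne_zero
  rw [show (1 : ℝ) / 2 - k = -((k : ℝ) - 1 / 2) by ring, Real.rpow_neg hτ.le,
    Real.rpow_sub_one hτ.ne']
  set p := τ.im ^ ((k : ℝ) - 1 / 2)
  have hp : (p : ℂ) ≠ 0 := ofReal_ne_zero.2 (Real.rpow_pos_of_pos hτ _).ne'
  simp only [Finset.mul_sum, ← Finset.sum_add_distrib]
  refine Finset.sum_congr rfl fun i _ => ?_
  push_cast
  field_simp
  linear_combination (-32 * τ.im * dTauBar (dTau (h i)) τ + (8 - 16 * k) * I * dTau (h i) τ) *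
    jacobiThetaML m (ℓ i) τ z * I_sq

end SkewCasimir

end

/-- If `Φ(τ, z) = Σ_{ℓ=0}^{2m−1} h_ℓ(τ) ϑ_{m,ℓ}(τ, z)` is annihilated by the skew Casimir
operator `C^sk_{k,m}` on `ℍ × ℂ`, with each `h_ℓ` twice continuously differentiable on `ℍ`,
then each `h_ℓ` satisfies `2iv(k − 1/2) ∂_τ h_ℓ + 4v² ∂_τ ∂_τ̄ h_ℓ = 0` on `ℍ`. -/
theorem skewCasimir_thetaDecomp (k m : ℤ) (hm : 1 ≤ m) (h : ℕ → ℂ → ℂ)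
    (hh : ∀ l < (2 * m).toNat, ContDiffOn ℝ 2 (h l) {τ : ℂ | 0 < τ.im})
    (hΦ : ∀ τ z : ℂ, 0 < τ.im →
      skewCasimir k m
        (fun w z => ∑ l ∈ Finset.range (2 * m).toNat, h l w * jacobiThetaML m (l : ℤ) w z)
        τ z = 0) :
    ∀ l < (2 * m).toNat, ∀ τ : ℂ, 0 < τ.im →
      2 * Complex.I * (τ.im : ℂ) * ((k : ℂ) - 1 / 2) * dTau (h l) τ +
        4 * (τ.im : ℂ) ^ 2 * dTau (dTauBar (h l)) τ = 0 := by
  intro l hl τ hτ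
  have hm₀ : 0 < m := by omega
  have hh' : ∀ i ∈ Finset.range (2 * m).toNat, ContDiffAt ℝ 2 (h i) τ := fun i hi =>
    (hh i (Finset.mem_range.1 hi)).contDiffAt
      ((isOpen_lt continuous_const continuous_im).mem_nhds hτ)
  rw [dTau_dTauBar_comm (hh' l (Finset.mem_range.2 hl))]
  refine eq_zero_of_sum_mul_jacobiThetaML_eq_zero hm₀ hτ (fun x => ?_) hl (c := fun i =>
    2 * I * τ.im * (k - 1 / 2) * dTau (h i) τ + 4 * τ.im ^ 2 * dTauBar (dTau (h i)) τ)
  have hx := hΦ τ x hτ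
  rwa [skewCasimir_sum_mul_jacobiThetaML k hm₀ hτ hh', mul_eq_zero, or_iff_right two_ne_zero] at hx
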